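/- arXiv:2006.03555 — 2 statements merged into one kernel-verified Lean document; each statement's English description precedes it below -/
import Mathlib

section
/- For ω ~ N(0, σ²I_d) and b ~ Uniform(0, 2π) independent, E[2 cos(ω·x + b) cos(ω·y + b)] = exp(-σ²‖x-y‖²/2) for all x, y ∈ ℝ^d. -/
/-!
Product-to-sum turns `2 cos (ω ⬝ x + b) cos (ω ⬝ y + b)` into
`cos (ω ⬝ (x - y)) + cos (ω ⬝ (x + y) + 2 b)`, and the second term averages to zero over a full
period of `b`. What remains is the real part of the characteristic function of `N(0, σ² I)` at
`x - y`, which factors over the coordinates into one-dimensional Gaussian characteristic functions.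
-/

open MeasureTheory ProbabilityTheory Real

open Complex in
theorem integral_cexp_sum_mul_I_pi_gaussianReal {ι : Type*} [Fintype ι] (v : NNReal) (z : ι → ℝ) :
    ∫ ω : ι → ℝ, cexp ((∑ i, ω i * z i : ℝ) * I) ∂(Measure.pi fun _ => gaussianReal 0 v) =
      cexp (-(v * ∑ i, z i ^ 2) / 2 : ℝ) := by
  have h_prod : ∀ ω : ι → ℝ, cexp ((∑ i, ω i * z i : ℝ) * I) = ∏ i, cexp (z i * ω i * I) := by
    intro ω
    rw [← Complex.exp_sum]
    push_cast
    simp only [Finset.sum_mul, mul_comm (ω _ : ℂ)]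
  simp_rw [h_prod]
  rw [integral_fintype_prod_eq_prod (fun i (w : ℝ) => cexp (z i * w * I))]
  simp_rw [← charFun_apply_real, charFun_gaussianReal, ← Complex.exp_sum]
  push_cast
  congr 1
  simp [Finset.mul_sum, Finset.sum_div, neg_div]

theorem integral_cos_eq_re_integral_cexp {α : Type*} [MeasurableSpace α] {μ : Measure α}
    [IsFiniteMeasure μ] {f : α → ℝ} (hf : AEMeasurable f μ) :
    ∫ x, Real.cos (f x) ∂μ = (∫ x, Complex.exp (f x * Complex.I) ∂μ).re := by
  have h_int : Integrable (fun x => Complex.exp (f x * Complex.I)) μ :=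
    .of_bound (by fun_prop) 1 (.of_forall fun x => (Complex.norm_exp_ofReal_mul_I _).le)
  rw [← RCLike.re_to_complex, ← integral_re h_int]
  simp only [RCLike.re_to_complex, Complex.exp_ofReal_mul_I_re]

theorem integral_cos_sum_mul_pi_gaussianReal {ι : Type*} [Fintype ι] (v : NNReal) (z : ι → ℝ) :
    ∫ ω : ι → ℝ, Real.cos (∑ i, ω i * z i) ∂(Measure.pi fun _ => gaussianReal 0 v) =
      Real.exp (-(v * ∑ i, z i ^ 2) / 2) := by
  have h_meas : Measurable fun ω : ι → ℝ => ∑ i, ω i * z i := by fun_prop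
  rw [integral_cos_eq_re_integral_cexp h_meas.aemeasurable,
    integral_cexp_sum_mul_I_pi_gaussianReal, ← Complex.ofReal_exp, Complex.ofReal_re]

section UniformPhase

local notation "𝒰" => (ENNReal.ofReal (2 * π))⁻¹ • volume.restrict (Set.Ioc (0 : ℝ) (2 * π))

instance : IsProbabilityMeasure 𝒰 :=
  ⟨by rw [Measure.smul_apply, Measure.restrict_apply_univ, Real.volume_Ioc, sub_zero, smul_eq_mul,
    ENNReal.inv_mul_cancel (by simp [Real.pi_pos]) ENNReal.ofReal_ne_top]⟩

theorem integral_cos_add_two_mul_uniform (k : ℝ) : ∫ b, Real.cos (k + 2 * b) ∂𝒰 = 0 := by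
  rw [integral_smul_measure, ← intervalIntegral.integral_of_le (by positivity)]
  simp_rw [add_comm k, intervalIntegral.integral_comp_mul_add Real.cos two_ne_zero k, integral_cos]
  rw [show 2 * (2 * π) + k = k + 2 * π + 2 * π by ring, sin_add_two_pi, sin_add_two_pi]
  simp

theorem integral_two_mul_cos_add_mul_cos_add_uniform (a c : ℝ) :
    ∫ b, 2 * Real.cos (a + b) * Real.cos (c + b) ∂𝒰 = Real.cos (a - c) := by
  have h_sum : ∀ b, 2 * Real.cos (a + b) * Real.cos (c + b) =
      Real.cos (a - c) + Real.cos (a + c + 2 * b) := fun b => by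
    have := cos_add_cos (a - c) (a + c + 2 * b)
    rw [show (a - c + (a + c + 2 * b)) / 2 = a + b by ring,
      show (a - c - (a + c + 2 * b)) / 2 = -(c + b) by ring, cos_neg] at this
    linarith
  have h_int : Integrable (fun b => Real.cos (a + c + 2 * b)) 𝒰 :=
    .of_bound (by fun_prop) 1 (.of_forall fun _ => abs_cos_le_one _)
  simp_rw [h_sum]
  rw [integral_add (integrable_const _) h_int, integral_const, probReal_univ, one_smul,
    integral_cos_add_two_mul_uniform, add_zero]

end UniformPhase

theorem norm_two_mul_cos_mul_cos_le (a b : ℝ) : ‖2 * Real.cos a * Real.cos b‖ ≤ 2 := by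
  rw [norm_mul, norm_mul, Real.norm_two, mul_assoc]
  exact mul_le_of_le_one_right zero_le_two
    (mul_le_one₀ (abs_cos_le_one _) (norm_nonneg _) (abs_cos_le_one _))

theorem random_fourier_feature_identity (d : ℕ) (σ : NNReal)
    (x y : Fin d → ℝ) :
    ∫ p : (Fin d → ℝ) × ℝ,
        2 * Real.cos ((∑ i, p.1 i * x i) + p.2) * Real.cos ((∑ i, p.1 i * y i) + p.2)
      ∂((Measure.pi fun _ : Fin d => gaussianReal 0 (σ ^ 2)).prod
          ((ENNReal.ofReal (2 * Real.pi))⁻¹ •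
            volume.restrict (Set.Ioc (0 : ℝ) (2 * Real.pi)))) =
    Real.exp (-(σ : ℝ) ^ 2 * (∑ i, (x i - y i) ^ 2) / 2) := by
  rw [integral_prod]
  · simp_rw [integral_two_mul_cos_add_mul_cos_add_uniform, ← Finset.sum_sub_distrib, ← mul_sub,
      integral_cos_sum_mul_pi_gaussianReal]
    push_cast
    ring_nf
  · exact .of_bound (by fun_prop) 2 (.of_forall fun _ => norm_two_mul_cos_mul_cos_le _ _)
end

section
/- For lower-triangular masking of the product of feature matrices: for each 1 ≤ i ≤ L, the i-th row of tril(Q'(K')ᵀ)C equals (Σ_{j=1}^i K'_j C_jᵀ)ᵀ Q'_i, where K'_j, C_j, Q'_i denote the j-th (resp. i-th) rows viewed as column vectors. -/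
open Matrix Finset

theorem tril_prefix_sum_identity (L M d : ℕ)
    (Q' K' : Matrix (Fin L) (Fin M) ℝ) (C : Matrix (Fin L) (Fin (d + 1)) ℝ)
    (tril : Matrix (Fin L) (Fin L) ℝ → Matrix (Fin L) (Fin L) ℝ)
    (htril : ∀ (A : Matrix (Fin L) (Fin L) ℝ) i j, tril A i j = if j ≤ i then A i j else 0) :
    ∀ (i : Fin L) (p : Fin (d + 1)),
      (tril (Q' * K'ᵀ) * C) i p =
        ∑ m, (∑ j ∈ Finset.univ.filter (fun j => j ≤ i), K' j m * C j p) * Q' i m := by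
  intro i p
  simp only [Matrix.mul_apply, htril, Matrix.transpose_apply, Finset.sum_mul,
    ite_mul, zero_mul, Finset.mul_sum]
  rw [← Finset.sum_filter]
  rw [Finset.sum_comm]
  refine Finset.sum_congr rfl fun j _ => Finset.sum_congr rfl fun m _ => ?_
  ring
end
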